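/- Any two distinct sets of the a.e. canonical covering of the display poset of an abstract merge tree are disjoint: if U(p), U(q) are canonical neighborhoods then either U(p) = U(q) or U(p) ∩ U(q) = ∅. -/
import Mathlib


/-- A persistent set: a functor from the poset `(ℝ, ≤)` to `Sets`. -/
structure PersistentSet where
  obj : ℝ → Type
  map : ∀ {s t : ℝ}, s ≤ t → obj s → obj t
  map_id : ∀ (t : ℝ) (x : obj t), map le_rfl x = x
  map_comp : ∀ {s t u : ℝ} (h₁ : s ≤ t) (h₂ : t ≤ u) (x : obj s),
    map h₂ (map h₁ x) = map (h₁.trans h₂) x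

def IsMergeTreeCriticalSet (S : PersistentSet) (C : Finset ℝ) : Prop :=
  (∀ t : ℝ, (∀ c ∈ C, t < c) → IsEmpty (S.obj t)) ∧
  (∀ t : ℝ, (∀ c ∈ C, c < t) → ∃ x : S.obj t, ∀ y : S.obj t, y = x) ∧
  (∀ (s t : ℝ) (h : s ≤ t), (∀ c ∈ C, c < s ∨ t < c) → Function.Bijective (S.map h))

/-- A (finite) abstract merge tree. -/
def IsAbstractMergeTree (S : PersistentSet) : Prop :=
  (∀ t : ℝ, Finite (S.obj t)) ∧ ∃ C : Finset ℝ, IsMergeTreeCriticalSet S C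

/-- The display poset `D_S = ⋃_t S(t) × {t}`. -/
def Display (S : PersistentSet) : Type := Σ _t : ℝ, S.obj _t

/-- The partial order of the display poset: `(a,t) ≤ (b,t')` iff `t ≤ t'` and
`S(t ≤ t')(a) = b`.  The height of `p : Display S` is `p.1`. -/
def DispLe (S : PersistentSet) (p q : Display S) : Prop :=
  ∃ h : p.1 ≤ q.1, S.map h p.2 = q.2

/-- The pseudo-distance `d((a,t),(b,t')) = (t̃ - t) + (t̃ - t')`, where `t̃` is the
infimum of the heights of common ancestors of the two points. -/
noncomputable def dDisp (S : PersistentSet) (p q : Display S) : ℝ :=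
  2 * sInf {t : ℝ | ∃ r : Display S, DispLe S p r ∧ DispLe S q r ∧ r.1 = t} - p.1 - q.1

/-- `S` is regular: all topological changes happen *at* the critical values. -/
def RegularPS (S : PersistentSet) : Prop :=
  ∀ t : ℝ, ∃ ε > (0 : ℝ), ∀ (t' : ℝ) (h : t ≤ t'), t' < t + ε → Function.Bijective (S.map h)

/-- The canonical neighborhood `U(p)` of `p` with adjacent critical heights `tp < t^p`. -/
def canonU (S : PersistentSet) (p : Display S) (tp tup : ℝ) : Set (Display S) :=
  {q | (DispLe S p q ∧ q.1 < tup) ∨ (DispLe S q p ∧ tp < q.1)}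

/-- The data making `U(p)` a member of the a.e. canonical covering: `tp` and `tup` are
the critical values adjacent to the non-critical height of `p`, and the transition maps
are locally injective at `p`. -/
def IsCanonData (S : PersistentSet) (C : Finset ℝ) (p : Display S) (tp tup : ℝ) : Prop :=
  tp ∈ C ∧ tup ∈ C ∧ tp < p.1 ∧ p.1 < tup ∧ p.1 ∉ C ∧
  (∀ c ∈ C, c ∉ Set.Ioo tp tup) ∧
  (∃ K > (0 : ℝ), ∀ (ε : ℝ) (hε : 0 < ε) (hεK : ε < K),
    (∀ x y : S.obj (p.1 - ε),
      S.map (by linarith : p.1 - ε ≤ p.1) x = p.2 →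
      S.map (by linarith : p.1 - ε ≤ p.1) y = p.2 → x = y) ∧
    (∀ x : S.obj p.1,
      S.map (by linarith : p.1 ≤ p.1 + ε) x =
        S.map (by linarith : p.1 ≤ p.1 + ε) p.2 → x = p.2))

lemma canonU_height (S : PersistentSet) {p : Display S} {tp tup : ℝ}
    (h1 : tp < p.1) (h2 : p.1 < tup) {r : Display S}
    (hr : r ∈ canonU S p tp tup) : tp < r.1 ∧ r.1 < tup := by
  rcases hr with ⟨⟨h, _⟩, hlt⟩ | ⟨⟨h, _⟩, hgt⟩
  · exact ⟨lt_of_lt_of_le h1 h, hlt⟩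
  · exact ⟨hgt, lt_of_le_of_lt h h2⟩

lemma canonU_eq_of_rel (S : PersistentSet) {tp tup : ℝ}
    (hbij : ∀ (s t : ℝ) (h : s ≤ t), tp < s → t < tup → Function.Bijective (S.map h))
    (p q : Display S) (hp1 : tp < p.1) (hp2 : p.1 < tup) (hq2 : q.1 < tup)
    (hle : p.1 ≤ q.1) (hrel : S.map hle p.2 = q.2) :
    canonU S p tp tup = canonU S q tp tup := by
  ext r
  constructor
  · rintro (⟨⟨h, hmap⟩, hlt⟩ | ⟨⟨h, hmap⟩, hgt⟩)
    · rcases le_or_gt q.1 r.1 with hqr | hqr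
      · refine Or.inl ⟨⟨hqr, ?_⟩, hlt⟩
        rw [← hrel, S.map_comp]
        exact hmap
      · refine Or.inr ⟨⟨hqr.le, ?_⟩, lt_of_lt_of_le hp1 h⟩
        rw [← hmap, S.map_comp]
        exact hrel
    · exact Or.inr ⟨⟨h.trans hle, by rw [← S.map_comp h hle, hmap]; exact hrel⟩, hgt⟩
  · rintro (⟨⟨h, hmap⟩, hlt⟩ | ⟨⟨h, hmap⟩, hgt⟩)
    · exact Or.inl ⟨⟨hle.trans h, by rw [← S.map_comp hle h, hrel]; exact hmap⟩, hlt⟩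
    · rcases le_or_gt r.1 p.1 with hrp | hrp
      · refine Or.inr ⟨⟨hrp, (hbij p.1 q.1 hle hp1 hq2).injective ?_⟩, hgt⟩
        rw [S.map_comp, hrel]
        exact hmap
      · refine Or.inl ⟨⟨hrp.le, (hbij r.1 q.1 h hgt hq2).injective ?_⟩, lt_of_le_of_lt h hq2⟩
        rw [S.map_comp, hmap]
        exact hrel

lemma canonU_disj_of_not_rel (S : PersistentSet) {tp tup : ℝ}
    (hbij : ∀ (s t : ℝ) (h : s ≤ t), tp < s → t < tup → Function.Bijective (S.map h))
    (p q : Display S) (hq1 : tp < q.1) (hq2 : q.1 < tup)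
    (hle : p.1 ≤ q.1) (hrel : S.map hle p.2 ≠ q.2) :
    Disjoint (canonU S p tp tup) (canonU S q tp tup) := by
  rw [Set.disjoint_left]
  rintro r (⟨⟨h, hmap⟩, hlt⟩ | ⟨⟨h, hmap⟩, hgt⟩) (⟨⟨h', hmap'⟩, hlt'⟩ | ⟨⟨h', hmap'⟩, hgt'⟩)
  · refine hrel ((hbij q.1 r.1 h' hq1 hlt').injective ?_)
    rw [S.map_comp, hmap']
    exact hmap
  · exact hrel (by rw [← hmap', ← hmap, S.map_comp])
  · refine hrel ?_
    have key : S.map (h'.trans h) q.2 = p.2 := by rw [← S.map_comp h' h, hmap']; exact hmap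
    rw [← key, S.map_comp]
    exact S.map_id q.1 q.2
  · exact hrel (by rw [← hmap', ← hmap, S.map_comp])

lemma not_Ioo {a b c : ℝ} (h : c ∉ Set.Ioo a b) : c ≤ a ∨ b ≤ c := by
  simp only [Set.mem_Ioo, not_and, not_lt] at h
  rcases le_or_gt c a with h1 | h1
  · exact Or.inl h1
  · exact Or.inr (h h1)

/-- two members of the a.e. canonical covering of the display poset are
either equal or disjoint. -/
theorem canonU_eq_or_disjoint (S : PersistentSet)
    (hS : IsAbstractMergeTree S) (hreg : RegularPS S)
    (C : Finset ℝ) (hC : IsMergeTreeCriticalSet S C)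
    (p q : Display S) (tp tup sp sup : ℝ)
    (hp : IsCanonData S C p tp tup) (hq : IsCanonData S C q sp sup) :
    canonU S p tp tup = canonU S q sp sup ∨
    Disjoint (canonU S p tp tup) (canonU S q sp sup) := by
  obtain ⟨hptp, hptup, hp1, hp2, -, hpI, -⟩ := hp
  obtain ⟨hqtp, hqtup, hq1, hq2, -, hqI, -⟩ := hq
  have hbijgen : ∀ (A B : ℝ), (∀ c ∈ C, c ∉ Set.Ioo A B) →
      ∀ (s t : ℝ) (h : s ≤ t), A < s → t < B → Function.Bijective (S.map h) := by
    intro A B hI s t h hs ht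
    refine hC.2.2 s t h (fun c hc => ?_)
    rcases not_Ioo (hI c hc) with h1 | h1
    · exact Or.inl (lt_of_le_of_lt h1 hs)
    · exact Or.inr (lt_of_lt_of_le ht h1)
  have hdisjoint : tup ≤ sp ∨ sup ≤ tp →
      Disjoint (canonU S p tp tup) (canonU S q sp sup) := by
    intro hcase
    refine Set.disjoint_left.mpr fun r hr hr' => ?_
    obtain ⟨a1, a2⟩ := canonU_height S hp1 hp2 hr
    obtain ⟨b1, b2⟩ := canonU_height S hq1 hq2 hr'
    rcases hcase with h | h <;> linarith
  rcases not_Ioo (hpI sp hqtp) with hsp | hsp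
  swap
  · exact Or.inr (hdisjoint (Or.inl hsp))
  rcases not_Ioo (hpI sup hqtup) with hsup | hsup
  · exact Or.inr (hdisjoint (Or.inr hsup))
  -- now sp ≤ tp and tup ≤ sup; deduce equality
  have htp : tp = sp := by
    rcases not_Ioo (hqI tp hptp) with h | h
    · linarith
    · linarith
  have htup : tup = sup := by
    rcases not_Ioo (hqI tup hptup) with h | h
    · linarith
    · linarith
  subst htp htup
  have hbij := hbijgen tp tup hpI
  rcases le_total p.1 q.1 with hle | hle
  · by_cases hrel : S.map hle p.2 = q.2
    · exact Or.inl (canonU_eq_of_rel S hbij p q hp1 hp2 hq2 hle hrel)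
    · exact Or.inr (canonU_disj_of_not_rel S hbij p q hq1 hq2 hle hrel)
  · by_cases hrel : S.map hle q.2 = p.2
    · exact Or.inl (canonU_eq_of_rel S hbij q p hq1 hq2 hp2 hle hrel).symm
    · exact Or.inr (canonU_disj_of_not_rel S hbij q p hp1 hp2 hle hrel).symm
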